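/- Coarse correlated price of anarchy of the single-item γ-hybrid auction without overbidding is at most 1/(1−γ): Let γ ∈ [0,1), n ≥ 2, valuations v : Fin n → ℝ≥0, and let the tie-breaking order favor a fixed bidder i* of maximal valuation (so i* wins whenever i* bids max_i v_i against no-overbidding opponents). Let μ be a probability measure on bid profiles supported on no-overbidding profiles (b_i ≤ v_i for all i, μ-a.s.), with all utilities μ-integrable, satisfying the coarse correlated equilibrium condition: for every bidder i and every constant deviation b'_i ∈ [0, v_i], E_{b∼μ}[u_i(b)] ≥ E_{b∼μ}[u_i(b'_i, b_{−i})]. Then E_{b∼μ}[SW(b)] ≥ (1−γ)·max_i v_i. -/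

import Mathlib

/-!
If the top bidder `i⋆` deviates to bidding `v i⋆`, she wins (no one else may bid above their
value, and ties go to her) and pays `γ v i⋆ + (1 - γ) M`, where `M` is the highest competing bid.
In the original profile her utility is at most `SW(b) - (1 - γ) M`, since either she wins and
pays at least `(1 - γ) M`, or the winner's value is at least `b (w b) ≥ M`. Hence pointwise
`(1 - γ) v i⋆ ≤ SW(b) + u i⋆ (deviation) - u i⋆ b`, and taking expectations, the CCE condition
makes the last two terms contribute a nonpositive amount.
-/

open MeasureTheory Finset
open scoped NNReal

section HybridAuction

variable {ι : Type*} [DecidableEq ι]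

theorem winner_update_eq {w : (ι → ℝ≥0) → ι} (hw : ∀ (b : ι → ℝ≥0) i, b i ≤ b (w b)) {i : ι}
    (htie : ∀ b, b i = b (w b) → w b = i) {b : ι → ℝ≥0} {x : ℝ≥0}
    (hb : ∀ j ≠ i, b j ≤ x) : w (Function.update b i x) = i := by
  refine htie _ (le_antisymm (hw _ i) ?_)
  rcases eq_or_ne (w (Function.update b i x)) i with h | h
  · rw [h]
  · rw [Function.update_of_ne h, Function.update_self]
    exact hb _ h

variable [Fintype ι]

noncomputable def hybridUtility (γ : ℝ) (v : ι → ℝ≥0) (w : (ι → ℝ≥0) → ι) (i : ι)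
    (b : ι → ℝ≥0) : ℝ :=
  if i = w b then
    (v (w b) : ℝ) - (γ * (b (w b) : ℝ) + (1 - γ) * (((univ.erase (w b)).sup b : ℝ≥0) : ℝ))
  else 0

theorem hybridUtility_update_of_wins (γ : ℝ) (v : ι → ℝ≥0) {w : (ι → ℝ≥0) → ι} {i : ι}
    {b : ι → ℝ≥0} {x : ℝ≥0} (hwin : w (Function.update b i x) = i) :
    hybridUtility γ v w i (Function.update b i x) =
      v i - (γ * x + (1 - γ) * (((univ.erase i).sup b : ℝ≥0) : ℝ)) := by
  have hothers : (univ.erase i).sup (Function.update b i x) = (univ.erase i).sup b :=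
    sup_congr rfl fun j hj => Function.update_of_ne (ne_of_mem_erase hj) _ _
  rw [hybridUtility, if_pos hwin.symm, hwin, hothers, Function.update_self]

theorem hybridUtility_le_welfare_sub {γ : ℝ} (hγ : 0 ≤ γ) (v : ι → ℝ≥0)
    {w : (ι → ℝ≥0) → ι} (hw : ∀ (b : ι → ℝ≥0) i, b i ≤ b (w b)) (i : ι) {b : ι → ℝ≥0}
    (hb : b (w b) ≤ v (w b)) :
    hybridUtility γ v w i b ≤ v (w b) - (1 - γ) * (((univ.erase i).sup b : ℝ≥0) : ℝ) := by
  have hM : (((univ.erase i).sup b : ℝ≥0) : ℝ) ≤ b (w b) := by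
    exact_mod_cast Finset.sup_le fun j _ => hw b j
  have hbv : (b (w b) : ℝ) ≤ v (w b) := by exact_mod_cast hb
  have hM0 := ((univ.erase i).sup b).coe_nonneg
  unfold hybridUtility
  split_ifs with hi
  · subst hi
    linarith [mul_nonneg hγ (b (w b)).coe_nonneg]
  · linarith [mul_nonneg hγ hM0]

theorem hybridUtility_smooth {γ : ℝ} (hγ : 0 ≤ γ) {v : ι → ℝ≥0} {istar : ι}
    (hstar : ∀ i, v i ≤ v istar) {w : (ι → ℝ≥0) → ι} (hw : ∀ (b : ι → ℝ≥0) i, b i ≤ b (w b))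
    (htie : ∀ b, b istar = b (w b) → w b = istar) {b : ι → ℝ≥0} (hb : ∀ i, b i ≤ v i) :
    (1 - γ) * (v istar : ℝ) ≤ v (w b)
      + hybridUtility γ v w istar (Function.update b istar (v istar))
      - hybridUtility γ v w istar b := by
  have hdev := hybridUtility_update_of_wins γ v
    (winner_update_eq hw htie fun j _ => (hb j).trans (hstar j))
  have hle := hybridUtility_le_welfare_sub hγ v hw istar (hb (w b))
  rw [hdev]
  linarith

end HybridAuction

theorem cce_poa_single_item_hybrid_no_overbidding_general
    (γ : ℝ) (hγ0 : 0 ≤ γ) (n : ℕ)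
    (v : Fin n → ℝ≥0)
    (istar : Fin n) (hstar : ∀ i, v i ≤ v istar)
    (w : (Fin n → ℝ≥0) → Fin n)
    (hw : ∀ b : Fin n → ℝ≥0, ∀ i, b i ≤ b (w b))
    (htie : ∀ b, b istar = b (w b) → w b = istar)
    (u : Fin n → (Fin n → ℝ≥0) → ℝ)
    (hu : ∀ i b, u i b =
      if i = w b then
        (v (w b) : ℝ) - (γ * (b (w b) : ℝ)
          + (1 - γ) * (((Finset.univ.erase (w b)).sup b : ℝ≥0) : ℝ))
      else 0)
    (μ : Measure (Fin n → ℝ≥0)) [IsProbabilityMeasure μ]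
    (hNOB : ∀ᵐ b ∂μ, ∀ i, b i ≤ v i)
    (hIntu : ∀ i, Integrable (u i) μ)
    (hIntSW : Integrable (fun b => (v (w b) : ℝ)) μ)
    (hIntdev : ∀ i (b' : ℝ≥0), Integrable (fun b => u i (Function.update b i b')) μ)
    (hCCE : ∀ i (b' : ℝ≥0), b' ≤ v i →
      ∫ b, u i (Function.update b i b') ∂μ ≤ ∫ b, u i b ∂μ) :
    (1 - γ) * ((Finset.univ.sup v : ℝ≥0) : ℝ) ≤ ∫ b, (v (w b) : ℝ) ∂μ := by
  obtain rfl : u = hybridUtility γ v w := funext fun i => funext (hu i)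
  have hmax : univ.sup v = v istar :=
    le_antisymm (Finset.sup_le fun i _ => hstar i) (le_sup (mem_univ _))
  have hdev := hIntdev istar (v istar)
  have hsmooth : ∫ _, (1 - γ) * (v istar : ℝ) ∂μ ≤ ∫ b, (v (w b) + hybridUtility γ v w istar
      (Function.update b istar (v istar)) - hybridUtility γ v w istar b : ℝ) ∂μ :=
    integral_mono_ae (integrable_const _) ((hIntSW.add hdev).sub (hIntu istar))
      (hNOB.mono fun b hb => hybridUtility_smooth hγ0 hstar hw htie hb)
  rw [integral_const, probReal_univ, one_smul,
    integral_sub (by exact hIntSW.add hdev) (hIntu istar), integral_add hIntSW hdev] at hsmooth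
  rw [hmax]
  linarith [hCCE istar (v istar) le_rfl]

/-- The coarse correlated price of anarchy of the single-item γ-hybrid auction without
overbidding is at most `1/(1-γ)`: in any coarse correlated equilibrium `μ` supported on
no-overbidding profiles, `E[SW] ≥ (1-γ)·max_i v_i`.  Here `w b` is the highest bidder,
with ties broken in favor of a fixed bidder `i⋆` of maximal valuation, the winner pays
`γ·b_{w b} + (1-γ)·max_{j ≠ w b} b_j`, and the CCE condition is required for all
constant no-overbidding deviations. -/
theorem cce_poa_single_item_hybrid_no_overbidding
    (γ : ℝ) (hγ0 : 0 ≤ γ) (hγ1 : γ < 1) (n : ℕ) (hn : 2 ≤ n)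
    (v : Fin n → ℝ≥0)
    (istar : Fin n) (hstar : ∀ i, v i ≤ v istar)
    (w : (Fin n → ℝ≥0) → Fin n)
    (hw : ∀ b : Fin n → ℝ≥0, ∀ i, b i ≤ b (w b))
    (htie : ∀ b, b istar = b (w b) → w b = istar)
    (u : Fin n → (Fin n → ℝ≥0) → ℝ)
    (hu : ∀ i b, u i b =
      if i = w b then
        (v (w b) : ℝ) - (γ * (b (w b) : ℝ)
          + (1 - γ) * (((Finset.univ.erase (w b)).sup b : ℝ≥0) : ℝ))
      else 0)
    (μ : Measure (Fin n → ℝ≥0)) [IsProbabilityMeasure μ]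
    (hNOB : ∀ᵐ b ∂μ, ∀ i, b i ≤ v i)
    (hIntu : ∀ i, Integrable (u i) μ)
    (hIntSW : Integrable (fun b => (v (w b) : ℝ)) μ)
    (hIntdev : ∀ i (b' : ℝ≥0), Integrable (fun b => u i (Function.update b i b')) μ)
    (hCCE : ∀ i (b' : ℝ≥0), b' ≤ v i →
      ∫ b, u i (Function.update b i b') ∂μ ≤ ∫ b, u i b ∂μ) :
    (1 - γ) * ((Finset.univ.sup v : ℝ≥0) : ℝ) ≤ ∫ b, (v (w b) : ℝ) ∂μ :=
  cce_poa_single_item_hybrid_no_overbidding_general γ hγ0 n v istar hstar w hw htie u hu μ hNOB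
    hIntu hIntSW hIntdev hCCE
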